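/- Let (G, B, β, ω) be a twisted C*-dynamical system and E a Hilbert (G,B,β,ω)-module. If ξ ∈ E is square-integrable (i.e. Bra(ξ)ζ ∈ L²(G,B) for all ζ ∈ E), then Bra(ξ) : E → L²(G,B) is a bounded B-linear map. -/

import Mathlib

open MeasureTheory MultiplierAlgebra

/-- A (Busby–Smith) twisted C*-dynamical system `(G, B, β, ω)`: `β : G → Aut(B)` is strongly
measurable, `ω : G × G → U(M(B))` is strictly measurable, with `β₁ = id`, `ω(1,s) = ω(s,1) = 1`,
`β_s ∘ β_t = Ad(ω(s,t)) ∘ β_{st}` and `β_r(ω(s,t)) ω(r,st) = ω(r,s) ω(rs,t)`. -/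
structure TwistedSystem (G : Type*) [Group G] [TopologicalSpace G] [MeasurableSpace G]
    (B : Type*) [NonUnitalCStarAlgebra B] where
  β : G → B ≃⋆ₐ[ℂ] B
  ω : G → G → 𝓜(ℂ, B)
  ω_unitary : ∀ s t, ω s t ∈ unitary (𝓜(ℂ, B))
  β_strMeas : ∀ b : B, StronglyMeasurable fun s => β s b
  ω_strMeas_left : ∀ b : B, StronglyMeasurable fun p : G × G => (ω p.1 p.2).fst b
  ω_strMeas_right : ∀ b : B, StronglyMeasurable fun p : G × G => (ω p.1 p.2).snd b
  β_one : ∀ b, β 1 b = b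
  ω_one_left : ∀ s, ω 1 s = 1
  ω_one_right : ∀ s, ω s 1 = 1
  βM : G → 𝓜(ℂ, B) ≃⋆ₐ[ℂ] 𝓜(ℂ, B)
  βM_coe : ∀ (s : G) (b : B), βM s (b : 𝓜(ℂ, B)) = ((β s b : B) : 𝓜(ℂ, B))
  ad : ∀ (s t : G) (b : B),
    ((β s (β t b) : B) : 𝓜(ℂ, B)) = ω s t * ((β (s * t) b : B) : 𝓜(ℂ, B)) * star (ω s t)
  cocycle : ∀ r s t : G, βM r (ω s t) * ω r (s * t) = ω r s * ω (r * s) t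

/-- The twisted left regular action `Γ` on `B`-valued functions:
`(Γ_s φ)(x) = ω(s, s⁻¹x)* · β_s(φ(s⁻¹x))`. -/
noncomputable def twistedGamma {G : Type*} [Group G] [TopologicalSpace G] [MeasurableSpace G]
    {B : Type*} [NonUnitalCStarAlgebra B]
    (T : TwistedSystem G B) (s : G) (φ : G → B) : G → B :=
  fun x => (star (T.ω s (s⁻¹ * x))).fst (T.β s (φ (s⁻¹ * x)))

open scoped RightActions

/-- The Hilbert C⋆-module class as it stood in Mathlib (December 2024): a right `A`-module
(through `SMul Aᵐᵒᵖ E`) with an `A`-valued inner product, `A`-linear on the right. -/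
class CStarModuleOld (A E : Type*) [NonUnitalSemiring A] [StarRing A]
    [Module ℂ A] [AddCommGroup E] [Module ℂ E] [PartialOrder A] [SMul Aᵐᵒᵖ E] [Norm A] [Norm E]
    extends Inner A E where
  inner_add_right {x} {y} {z} : inner x (y + z) = inner x y + inner x z
  inner_self_nonneg {x} : 0 ≤ inner x x
  inner_self {x} : inner x x = 0 ↔ x = 0
  inner_op_smul_right {a : A} {x y : E} : inner x (y <• a) = inner x y * a
  inner_smul_right_complex {z : ℂ} {x} {y} : inner x (z • y) = z • inner x y
  star_inner x y : star (inner x y) = inner y x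
  norm_eq_sqrt_norm_inner_self x : ‖x‖ = Real.sqrt ‖inner x x‖

/-- A Hilbert `(G,B,β,ω)`-module: a Hilbert C*-module `E` over `B` together with a strongly
measurable twisted action `γ` of `G` by isometric surjections satisfying
`γ_s(ζ·b) = γ_s(ζ)·β_s(b)`, `⟨γ_s ζ, γ_s η⟩ = β_s⟨ζ,η⟩` and `γ_r γ_s(ζ) = γ_{rs}(ζ)·ω(r,s)*`,
where the right action of `M(B)` on `E` is the canonical extension of the `B`-action. -/
structure TwistedHilbertModule {G : Type*} [Group G] [TopologicalSpace G] [MeasurableSpace G]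
    {B : Type*} [NonUnitalCStarAlgebra B] [PartialOrder B] [StarOrderedRing B]
    (T : TwistedSystem G B)
    (E : Type*) [NormedAddCommGroup E] [NormedSpace ℂ E] [CompleteSpace E]
    [SMul Bᵐᵒᵖ E] [CStarModuleOld B E] where
  γ : G → E → E
  γ_isometry : ∀ s, Isometry (γ s)
  γ_surjective : ∀ s, Function.Surjective (γ s)
  γ_add : ∀ s (x y : E), γ s (x + y) = γ s x + γ s y
  γ_strMeas : ∀ x : E, StronglyMeasurable fun s => γ s x
  γ_one : ∀ x : E, γ 1 x = x
  /-- The canonical extension of the right `B`-action on `E` to `M(B)`. -/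
  smulM : 𝓜(ℂ, B) → E → E
  smulM_coe : ∀ (b : B) (x : E), smulM (b : 𝓜(ℂ, B)) x = x <• b
  inner_smulM : ∀ (m : 𝓜(ℂ, B)) (x y : E), (inner B x (smulM m y) : B) = m.snd (inner B x y)
  γ_smul : ∀ (s : G) (x : E) (b : B), γ s (x <• b) = γ s x <• T.β s b
  γ_inner : ∀ (s : G) (x y : E), (inner B (γ s x) (γ s y) : B) = T.β s (inner B x y)
  γ_twist : ∀ (r s : G) (x : E), γ r (γ s x) = smulM (star (T.ω r s)) (γ (r * s) x)

/-! `Bra(ξ)` is a `ℂ`-linear map from the Banach space `E` to `L²(G, B)`, so by the closed graph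
theorem it suffices that its graph be closed. If `ζₙ → ζ` in `E` and `Bra(ξ) ζₙ → f` in `L²`, a
subsequence converges to `f` almost everywhere, while `Bra(ξ) ζₙ → Bra(ξ) ζ` pointwise because
`⟨γ_x ξ, ·⟩` is continuous by the Cauchy–Schwarz inequality `‖⟨x, y⟩‖ ≤ ‖x‖ ‖y‖`; hence
`f = Bra(ξ) ζ`. -/

open Filter Topology
open scoped ENNReal

namespace CStarModuleOld

section Algebra

variable {A : Type*} [NonUnitalCStarAlgebra A] [PartialOrder A]
  {E : Type*} [AddCommGroup E] [Module ℂ E] [SMul Aᵐᵒᵖ E] [Norm E] [CStarModuleOld A E]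

local notation "⟪" x ", " y "⟫" => inner A x y

lemma inner_smul_left_complex (z : ℂ) (x y : E) : ⟪z • x, y⟫ = star z • ⟪x, y⟫ := by
  rw [← star_inner y, inner_smul_right_complex, star_smul, star_inner]

variable (A) in
def innerₛₗ : E →ₗ⋆[ℂ] E →ₗ[ℂ] A where
  toFun x :=
    { toFun := fun y => ⟪x, y⟫
      map_add' := fun _ _ => inner_add_right
      map_smul' := fun _ _ => inner_smul_right_complex }
  map_add' x y := by
    ext z
    change ⟪x + y, z⟫ = ⟪x, z⟫ + ⟪y, z⟫
    rw [← star_inner z, inner_add_right, star_add, star_inner, star_inner]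
  map_smul' z x := by
    ext y
    exact inner_smul_left_complex z x y

lemma inner_zero_right (x : E) : ⟪x, 0⟫ = 0 := map_zero (innerₛₗ A x)

lemma inner_zero_left (y : E) : ⟪0, y⟫ = 0 := LinearMap.map_zero₂ (innerₛₗ A) y

lemma inner_sub_right (x y z : E) : ⟪x, y - z⟫ = ⟪x, y⟫ - ⟪x, z⟫ := map_sub (innerₛₗ A x) y z

lemma inner_sub_left (x y z : E) : ⟪x - y, z⟫ = ⟪x, z⟫ - ⟪y, z⟫ :=
  LinearMap.map_sub₂ (innerₛₗ A) x y z

lemma inner_op_smul_left (a : A) (x y : E) : ⟪x <• a, y⟫ = star a * ⟪x, y⟫ := by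
  rw [← star_inner y, inner_op_smul_right, star_mul, star_inner]

lemma inner_ofReal_smul_right (t : ℝ) (x y : E) : ⟪x, (t : ℂ) • y⟫ = t • ⟪x, y⟫ := by
  rw [inner_smul_right_complex, Complex.coe_smul]

lemma inner_ofReal_smul_left (t : ℝ) (x y : E) : ⟪(t : ℂ) • x, y⟫ = t • ⟪x, y⟫ := by
  rw [inner_smul_left_complex, Complex.star_def, Complex.conj_ofReal, Complex.coe_smul]

variable (A) in
lemma norm_sq_eq (x : E) : ‖x‖ ^ 2 = ‖⟪x, x⟫‖ := by
  rw [norm_eq_sqrt_norm_inner_self (A := A) x, Real.sq_sqrt (norm_nonneg _)]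

variable [StarOrderedRing A]

lemma inner_mul_inner_swap_le (x y : E) : ⟪y, x⟫ * ⟪x, y⟫ ≤ ‖x‖ ^ 2 • ⟪y, y⟫ := by
  rcases eq_or_ne x 0 with rfl | hx
  · simp only [norm_sq_eq A, inner_zero_left, inner_zero_right, zero_mul, norm_zero, zero_smul,
      le_refl]
  have ht : 0 < ‖x‖ ^ 2 := by
    rw [norm_sq_eq A]
    exact norm_pos_iff.mpr (mt inner_self.mp hx)
  set t := ‖x‖ ^ 2
  have key : ∀ a : A, (0 : A) ≤ t • (star a * a) - t • (star a * ⟪x, y⟫)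
      - t • (⟪y, x⟫ * a) + t • t • ⟪y, y⟫ := fun a =>
    calc (0 : A) ≤ ⟪x <• a - (t : ℂ) • y, x <• a - (t : ℂ) • y⟫ := inner_self_nonneg
      _ = star a * ⟪x, x⟫ * a - t • (star a * ⟪x, y⟫) - t • (⟪y, x⟫ * a) + t • t • ⟪y, y⟫ := by
          simp only [inner_sub_left, inner_sub_right, inner_op_smul_left, inner_op_smul_right,
            inner_ofReal_smul_left, inner_ofReal_smul_right, sub_mul, smul_sub, smul_mul_assoc,
            mul_assoc]
          abel
      _ ≤ _ := by
          gcongr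
          calc star a * ⟪x, x⟫ * a ≤ ‖⟪x, x⟫‖ • (star a * a) :=
                CStarAlgebra.star_left_conjugate_le_norm_smul (star_inner x x)
            _ = t • (star a * a) := by rw [← norm_sq_eq A]
  have := key ⟪x, y⟫
  rwa [star_inner, sub_self, zero_sub, le_neg_add_iff_add_le, add_zero,
    smul_le_smul_iff_of_pos_left ht] at this

variable (A) in
lemma norm_inner_le (x y : E) : ‖⟪x, y⟫‖ ≤ ‖x‖ * ‖y‖ := by
  have hsq : ‖⟪x, y⟫‖ ^ 2 ≤ (‖x‖ * ‖y‖) ^ 2 :=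
    calc ‖⟪x, y⟫‖ ^ 2 = ‖⟪y, x⟫ * ⟪x, y⟫‖ := by
          rw [← star_inner x, CStarRing.norm_star_mul_self, pow_two]
      _ ≤ ‖‖x‖ ^ 2 • ⟪y, y⟫‖ := by
          refine CStarAlgebra.norm_le_norm_of_nonneg_of_le ?_ (inner_mul_inner_swap_le x y)
          rw [← star_inner x]
          exact star_mul_self_nonneg _
      _ = (‖x‖ * ‖y‖) ^ 2 := by
          rw [norm_smul, ← norm_sq_eq A y, Real.norm_of_nonneg (by positivity), mul_pow]
  have hnn : 0 ≤ ‖x‖ * ‖y‖ := by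
    rw [norm_eq_sqrt_norm_inner_self (A := A) x, norm_eq_sqrt_norm_inner_self (A := A) y]
    positivity
  exact (pow_le_pow_iff_left₀ (norm_nonneg _) hnn two_ne_zero).mp hsq

end Algebra

variable {A : Type*} [NonUnitalCStarAlgebra A] [PartialOrder A] [StarOrderedRing A]
  {E : Type*} [SeminormedAddCommGroup E] [Module ℂ E] [SMul Aᵐᵒᵖ E] [CStarModuleOld A E]

lemma continuous_inner_right (x : E) : Continuous fun y : E => (inner A x y : A) :=
  AddMonoidHomClass.continuous_of_bound (innerₛₗ A x) ‖x‖ (norm_inner_le A x)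

end CStarModuleOld

namespace MeasureTheory

variable {α F : Type*} [MeasurableSpace α] {μ : Measure α} {p : ℝ≥0∞} [NormedAddCommGroup F]

theorem Lp.ae_eq_of_tendsto_of_ae_tendsto [Fact (1 ≤ p)] {f : ℕ → Lp F p μ} {g : Lp F p μ}
    {h : α → F} (hfg : Tendsto f atTop (𝓝 g))
    (hfh : ∀ᵐ x ∂μ, Tendsto (fun n => f n x) atTop (𝓝 (h x))) : g =ᵐ[μ] h := by
  have hmeas : TendstoInMeasure μ (fun n => ⇑(f n)) atTop g :=
    tendstoInMeasure_of_tendsto_eLpNorm (zero_lt_one.trans_le Fact.out).ne'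
      (fun n => Lp.aestronglyMeasurable _) (Lp.aestronglyMeasurable _)
      ((Lp.tendsto_Lp_iff_tendsto_eLpNorm' f g).mp hfg)
  obtain ⟨ns, hns, hae⟩ := hmeas.exists_seq_tendsto_ae
  filter_upwards [hae, hfh] with x hxg hxh
  exact tendsto_nhds_unique hxg (hxh.comp hns.tendsto_atTop)

end MeasureTheory

namespace LinearMap

open MeasureTheory

variable {𝕜 α E F : Type*} [NontriviallyNormedField 𝕜] [MeasurableSpace α] {μ : Measure α}
  {p : ℝ≥0∞} [NormedAddCommGroup E] [NormedSpace 𝕜 E] [NormedAddCommGroup F] [NormedSpace 𝕜 F]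

noncomputable def toLp (g : E →ₗ[𝕜] α → F) (hg : ∀ ζ, MemLp (g ζ) p μ) : E →ₗ[𝕜] Lp F p μ where
  toFun ζ := (hg ζ).toLp (g ζ)
  map_add' ζ η := by simp_rw [map_add]; exact MemLp.toLp_add (hg ζ) (hg η)
  map_smul' c ζ := by simp_rw [map_smul]; exact MemLp.toLp_const_smul c (hg ζ)

lemma coeFn_toLp (g : E →ₗ[𝕜] α → F) (hg : ∀ ζ, MemLp (g ζ) p μ) (ζ : E) :
    g.toLp hg ζ =ᵐ[μ] g ζ :=
  (hg ζ).coeFn_toLp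

variable [Fact (1 ≤ p)] [CompleteSpace E] [CompleteSpace F]

theorem continuous_toLp (g : E →ₗ[𝕜] α → F) (hg : ∀ ζ, MemLp (g ζ) p μ)
    (hcont : ∀ x, Continuous fun ζ => g ζ x) : Continuous (g.toLp hg) := by
  refine (g.toLp hg).continuous_of_seq_closed_graph fun u ζ f hu hgu => ?_
  have hpt : ∀ᵐ x ∂μ, Tendsto (fun n => g.toLp hg (u n) x) atTop (𝓝 (g ζ x)) := by
    filter_upwards [ae_all_iff.mpr fun n => g.coeFn_toLp hg (u n)] with x hx
    exact (((hcont x).tendsto ζ).comp hu).congr fun n => (hx n).symm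
  exact Lp.ext ((Lp.ae_eq_of_tendsto_of_ae_tendsto hgu hpt).trans (g.coeFn_toLp hg ζ).symm)

theorem exists_eLpNorm_le_mul_norm (g : E →ₗ[𝕜] α → F) (hg : ∀ ζ, MemLp (g ζ) p μ)
    (hcont : ∀ x, Continuous fun ζ => g ζ x) :
    ∃ C : ℝ, 0 ≤ C ∧ ∀ ζ, eLpNorm (g ζ) p μ ≤ ENNReal.ofReal (C * ‖ζ‖) := by
  let L : E →L[𝕜] Lp F p μ := ⟨g.toLp hg, g.continuous_toLp hg hcont⟩
  refine ⟨‖L‖, norm_nonneg L, fun ζ => ?_⟩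
  calc eLpNorm (g ζ) p μ = ‖L ζ‖ₑ := (Lp.enorm_toLp (hg ζ)).symm
    _ = ENNReal.ofReal ‖L ζ‖ := (ofReal_norm _).symm
    _ ≤ ENNReal.ofReal (‖L‖ * ‖ζ‖) := ENNReal.ofReal_le_ofReal (L.le_opNorm ζ)

end LinearMap

theorem bra_is_bounded_module_map_general
    {G : Type*} [TopologicalSpace G] [Group G]
    [MeasurableSpace G] (μ : Measure G)
    {B : Type*} [NonUnitalCStarAlgebra B] [PartialOrder B] [StarOrderedRing B]
    {E : Type*} [NormedAddCommGroup E] [NormedSpace ℂ E] [CompleteSpace E]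
    [SMul Bᵐᵒᵖ E] [CStarModuleOld B E]
    (T : TwistedSystem G B) (M : TwistedHilbertModule T E) (ξ : E)
    (hsi : ∀ ζ : E, MemLp (fun x => (inner B (M.γ x ξ) ζ : B)) 2 μ) :
    (∀ ζ η : E, (fun x => (inner B (M.γ x ξ) (ζ + η) : B))
        = fun x => (inner B (M.γ x ξ) ζ : B) + (inner B (M.γ x ξ) η : B)) ∧
    (∀ (ζ : E) (b : B), (fun x => (inner B (M.γ x ξ) (ζ <• b) : B))
        = fun x => (inner B (M.γ x ξ) ζ : B) * b) ∧
    ∃ C : ℝ, 0 ≤ C ∧ ∀ ζ : E,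
      eLpNorm (fun x => (inner B (M.γ x ξ) ζ : B)) 2 μ ≤ ENNReal.ofReal (C * ‖ζ‖) :=
  ⟨fun _ _ => funext fun _ => CStarModuleOld.inner_add_right,
    fun _ _ => funext fun _ => CStarModuleOld.inner_op_smul_right,
    (LinearMap.pi fun x => CStarModuleOld.innerₛₗ B (M.γ x ξ)).exists_eLpNorm_le_mul_norm hsi
      fun x => CStarModuleOld.continuous_inner_right (M.γ x ξ)⟩

/-- if `ξ` is square-integrable then `Bra(ξ) : E → L²(G,B)` is a bounded
`B`-linear (and additive, hence module-) map. -/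
theorem bra_is_bounded_module_map
    {G : Type*} [TopologicalSpace G] [T2Space G] [LocallyCompactSpace G]
    [SecondCountableTopology G] [Group G] [IsTopologicalGroup G]
    [MeasurableSpace G] [BorelSpace G] (μ : Measure G) [μ.IsHaarMeasure]
    {B : Type*} [NonUnitalCStarAlgebra B] [PartialOrder B] [StarOrderedRing B]
    [TopologicalSpace.SeparableSpace B]
    {E : Type*} [NormedAddCommGroup E] [NormedSpace ℂ E] [CompleteSpace E]
    [SMul Bᵐᵒᵖ E] [CStarModuleOld B E]
    (T : TwistedSystem G B) (M : TwistedHilbertModule T E) (ξ : E)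
    (hsi : ∀ ζ : E, MemLp (fun x => (inner B (M.γ x ξ) ζ : B)) 2 μ) :
    (∀ ζ η : E, (fun x => (inner B (M.γ x ξ) (ζ + η) : B))
        = fun x => (inner B (M.γ x ξ) ζ : B) + (inner B (M.γ x ξ) η : B)) ∧
    (∀ (ζ : E) (b : B), (fun x => (inner B (M.γ x ξ) (ζ <• b) : B))
        = fun x => (inner B (M.γ x ξ) ζ : B) * b) ∧
    ∃ C : ℝ, 0 ≤ C ∧ ∀ ζ : E,
      eLpNorm (fun x => (inner B (M.γ x ξ) ζ : B)) 2 μ ≤ ENNReal.ofReal (C * ‖ζ‖) :=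
  bra_is_bounded_module_map_general μ T M ξ hsi
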